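/- Let α, e be epsilon numbers and s an ordinal with s < α⁺ and Ep(s) ∩ α ⊆ e. Then s[α := e][e := α] = s, i.e., the substitution of α by e is inverted by the substitution of e by α. -/

import Mathlib

/-! On the ordinals `x < α⁺` whose epsilon numbers below `α` lie below `e`, the substitution of
`α` by `e` is strictly monotone. Below an epsilon number `x ≤ α`, every epsilon number occurring
is below `α`, hence fixed and below `e`, so the images stay below the image of `x`; elsewhere,
comparing two ordinals reduces through their leading terms `ω ^ a * b` to comparing exponents.
Monotonicity keeps the image of the tail of `s` below `ω ^` (image of the leading exponent), so the
substitution maps the Cantor normal form of `s` term by term onto a Cantor normal form, and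
substituting back recovers `s` by induction. -/

open Ordinal

def IsEps (x : Ordinal.{0}) : Prop := omega0 ^ x = x

noncomputable def nextEps (x : Ordinal.{0}) : Ordinal.{0} := sInf {e | IsEps e ∧ x < e}

inductive InEp : Ordinal.{0} → Ordinal.{0} → Prop
  | self (x : Ordinal.{0}) (h : omega0 ^ x = x) : InEp x x
  | exp (x e c y : Ordinal.{0}) (h : omega0 ^ x ≠ x) (hm : (e, c) ∈ CNF omega0 x)
      (hy : InEp y e) : InEp y x

/-- The set of epsilon numbers appearing in the iterated Cantor normal form of `x`. -/
def Ep (x : Ordinal.{0}) : Set Ordinal.{0} := {y | InEp y x}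

/-- Substitution of the epsilon number `α` by the epsilon number `e` in the
iterated Cantor normal form of `x`. -/
noncomputable def subst (α e : Ordinal.{0}) (x : Ordinal.{0}) : Ordinal.{0} :=
  if h : omega0 ^ x = x then (if x = α then e else x)
  else ((CNF omega0 x).attach.map (fun p => omega0 ^ (subst α e p.1.1) * p.1.2)).sum
termination_by x
decreasing_by
  have hx0 : x ≠ 0 := by
    rintro rfl
    have := p.2
    simp [Ordinal.CNF.zero_right] at this
  have hle := Ordinal.CNF.fst_le_log p.2
  have hlt : Ordinal.log omega0 x < x := by
    have h1 : x < omega0 ^ x :=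
      lt_of_le_of_ne (Ordinal.right_le_opow x one_lt_omega0) (Ne.symm h)
    exact (Ordinal.lt_opow_iff_log_lt one_lt_omega0 hx0).mp h1
  exact lt_of_le_of_lt hle hlt

theorem div_lt_div_or_mod_lt {x y : Ordinal} (w : Ordinal) (h : y < x) :
    y / w < x / w ∨ (y / w = x / w ∧ y % w < x % w) := by
  rcases eq_or_ne w 0 with rfl | hw
  · simpa using h
  have hdiv : y / w ≤ x / w := (mul_le_iff_le_div hw).1 ((mul_div_le y w).trans h.le)
  refine hdiv.lt_or_eq.imp_right fun heq => ⟨heq, ?_⟩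
  rw [← div_add_mod y w, ← div_add_mod x w, heq] at h
  exact (add_lt_add_iff_left _).1 h

theorem omega0_opow_mul_add_lt_opow {p q d t : Ordinal} (hpq : p < q) (hd : d < ω)
    (ht : t < ω ^ q) : ω ^ p * d + t < ω ^ q :=
  isPrincipal_add_omega0_opow q (opow_mul_lt_opow hd hpq) ht

theorem IsEps.pos {x : Ordinal.{0}} (h : IsEps x) : 0 < x := by
  rcases eq_zero_or_pos x with rfl | hx
  · simp [IsEps] at h
  · exact hx

theorem IsEps.log_eq {x : Ordinal.{0}} (h : IsEps x) : log ω x = x := by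
  conv_lhs => rw [← h]
  exact log_opow one_lt_omega0 x

theorem IsEps.CNF_eq {x : Ordinal.{0}} (h : IsEps x) : CNF ω x = [(x, 1)] := by
  rw [CNF.ne_zero h.pos.ne', h.log_eq, h, div_self h.pos.ne', mod_self, CNF.zero_right]

theorem IsEps.le_of_lt_nextEps {α x : Ordinal.{0}} (hx : IsEps x) (h : x < nextEps α) :
    x ≤ α :=
  not_lt.1 fun hαx => (csInf_le' (show x ∈ {e | IsEps e ∧ α < e} from ⟨hx, hαx⟩)).not_gt h

theorem log_lt_self_of_not_isEps {x : Ordinal.{0}} (h : ¬IsEps x) (hx : x ≠ 0) :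
    log ω x < x :=
  (lt_opow_iff_log_lt one_lt_omega0 hx).1 <|
    (right_le_opow x one_lt_omega0).lt_of_ne fun hx' => h hx'.symm

section Ep

variable {x y z a c : Ordinal.{0}}

theorem Ep_zero : Ep 0 = ∅ := by
  refine Set.eq_empty_of_forall_notMem fun z hz => ?_
  rcases hz with (⟨_, h⟩ | ⟨_, _, _, _, _, hm, _⟩)
  · simp at h
  · simp [CNF.zero_right] at hm

theorem mem_Ep_self (h : IsEps x) : x ∈ Ep x := InEp.self x h

theorem isEps_of_mem_Ep (h : z ∈ Ep x) : IsEps z := by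
  induction h with
  | self _ h => exact h
  | exp _ _ _ _ _ _ _ ih => exact ih

theorem le_of_mem_Ep (h : z ∈ Ep x) : z ≤ x := by
  induction h with
  | self => exact le_rfl
  | exp _ _ _ _ _ hm _ ih => exact ih.trans ((CNF.fst_le_log hm).trans (log_le_self _ _))

theorem Ep_subset_of_mem_CNF (hx : ¬IsEps x) (h : (a, c) ∈ CNF ω x) : Ep a ⊆ Ep x :=
  fun _ hz => InEp.exp x a c _ hx h hz

theorem Ep_subset_of_CNF_subset (hx : ¬IsEps x) (h : CNF ω y ⊆ CNF ω x) : Ep y ⊆ Ep x := by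
  rintro z (⟨_, hy⟩ | ⟨_, a, c, _, _, hm, hz⟩)
  · exact Ep_subset_of_mem_CNF hx (h ((IsEps.CNF_eq hy).symm ▸ List.mem_singleton_self _))
      (mem_Ep_self hy)
  · exact Ep_subset_of_mem_CNF hx (h hm) hz

theorem Ep_log_subset (x : Ordinal.{0}) : Ep (log ω x) ⊆ Ep x := by
  rcases eq_or_ne x 0 with rfl | hx0
  · rw [log_zero_right]
  by_cases hx : IsEps x
  · rw [hx.log_eq]
  refine Ep_subset_of_mem_CNF hx (c := x / ω ^ log ω x) ?_
  rw [CNF.ne_zero hx0]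
  exact List.mem_cons_self

theorem Ep_mod_opow_subset (h : x < ω ^ (a + 1)) : Ep (x % ω ^ a) ⊆ Ep x := by
  rcases lt_or_ge x (ω ^ a) with hlt | hle
  · rw [mod_eq_of_lt hlt]
  have hx0 : x ≠ 0 := (opow_pos a omega0_pos).trans_le hle |>.ne'
  obtain rfl : log ω x = a := (log_eq_iff one_lt_omega0 hx0 a).2 ⟨hle, h⟩
  by_cases hx : IsEps x
  · rw [hx.log_eq, hx, mod_self, Ep_zero]
    exact Set.empty_subset _
  refine Ep_subset_of_CNF_subset hx ?_
  rw [CNF.ne_zero hx0 (o := x)]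
  exact List.subset_cons_self _ _

end Ep

section Subst

variable {α e x : Ordinal.{0}}

theorem subst_of_isEps (h : IsEps x) : subst α e x = if x = α then e else x := by
  rw [subst, dif_pos (show ω ^ x = x from h)]

theorem subst_of_isEps_of_ne (h : IsEps x) (hne : x ≠ α) : subst α e x = x := by
  rw [subst_of_isEps h, if_neg hne]

theorem isEps_subst (he : IsEps e) (hx : IsEps x) : IsEps (subst α e x) := by
  rw [subst_of_isEps hx]
  split_ifs
  exacts [he, hx]

theorem subst_of_not_isEps (hx : ¬IsEps x) :
    subst α e x = ((CNF ω x).map fun p => ω ^ subst α e p.1 * p.2).sum := by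
  rw [subst, dif_neg (show ω ^ x ≠ x from hx)]
  conv_rhs => rw [← List.attach_map_subtype_val (CNF ω x), List.map_map]
  rfl

theorem subst_zero : subst α e 0 = 0 := by
  rw [subst_of_not_isEps (by simp [IsEps]), CNF.zero_right, List.map_nil, List.sum_nil]

theorem subst_eq_sum_CNF (he : IsEps e) (x : Ordinal.{0}) :
    subst α e x = ((CNF ω x).map fun p => ω ^ subst α e p.1 * p.2).sum := by
  by_cases hx : IsEps x
  · simpa [hx.CNF_eq] using (isEps_subst he hx).symm
  exact subst_of_not_isEps hx

theorem subst_eq_opow_mul_add (he : IsEps e) {a : Ordinal.{0}} (hx : x < ω ^ (a + 1)) :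
    subst α e x = ω ^ subst α e a * (x / ω ^ a) + subst α e (x % ω ^ a) := by
  rcases lt_or_ge x (ω ^ a) with hlt | hle
  · rw [div_eq_zero_of_lt hlt, mod_eq_of_lt hlt, mul_zero, zero_add]
  have hx0 : x ≠ 0 := (opow_pos a omega0_pos).trans_le hle |>.ne'
  obtain rfl : log ω x = a := (log_eq_iff one_lt_omega0 hx0 a).2 ⟨hle, hx⟩
  rw [subst_eq_sum_CNF he x, CNF.ne_zero hx0, List.map_cons, List.sum_cons,
    ← subst_eq_sum_CNF he]

theorem subst_opow_mul_add (he : IsEps e) {p d t : Ordinal.{0}} (hd : d < ω) (ht : t < ω ^ p) :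
    subst α e (ω ^ p * d + t) = ω ^ subst α e p * d + subst α e t := by
  rw [subst_eq_opow_mul_add he (opow_mul_add_lt_opow hd ht (lt_add_one p)),
    mul_add_div _ (opow_ne_zero p omega0_ne_zero), div_eq_zero_of_lt ht, add_zero,
    mul_add_mod_self, mod_eq_of_lt ht]

theorem subst_lt_of_forall_mem_Ep (he : IsEps e) {E : Ordinal.{0}} (hE : IsEps E)
    (y : Ordinal.{0}) (h : ∀ z ∈ Ep y, subst α e z < E) : subst α e y < E := by
  induction y using WellFoundedLT.induction with | ind y IH
  by_cases hy : IsEps y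
  · exact h y (mem_Ep_self hy)
  rcases eq_or_ne y 0 with rfl | hy0
  · rw [subst_zero]
    exact hE.pos
  have hsucc := lt_opow_succ_log_self one_lt_omega0 y
  have htail := mod_opow_log_lt_self ω hy0
  rw [subst_eq_opow_mul_add he hsucc, ← hE]
  refine omega0_opow_mul_add_lt_opow ?_ (div_opow_log_lt y one_lt_omega0) ?_
  · exact IH _ (log_lt_self_of_not_isEps hy hy0) fun z hz => h z (Ep_log_subset y hz)
  · exact (IH _ htail fun z hz => h z (Ep_mod_opow_subset hsucc hz)).trans_eq hE.symm

def substDomain (α e : Ordinal.{0}) : Set Ordinal.{0} :=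
  {x | x < nextEps α ∧ Ep x ∩ Set.Iio α ⊆ Set.Iio e}

theorem mem_substDomain_of_le {y : Ordinal.{0}} (hx : x ∈ substDomain α e) (hyx : y ≤ x)
    (hEp : Ep y ⊆ Ep x) : y ∈ substDomain α e :=
  ⟨hyx.trans_lt hx.1, (Set.inter_subset_inter_left _ hEp).trans hx.2⟩

theorem subst_lt_opow_subst (he : IsEps e) {a : Ordinal.{0}}
    (hmono : ∀ z ∈ substDomain α e, z < a → subst α e z < subst α e a)
    (r : Ordinal.{0}) (hr : r ∈ substDomain α e) (hra : r < ω ^ a) :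
    subst α e r < ω ^ subst α e a := by
  induction r using WellFoundedLT.induction with | ind r IH
  rcases eq_or_ne r 0 with rfl | hr0
  · rw [subst_zero]
    exact opow_pos _ omega0_pos
  have hsucc := lt_opow_succ_log_self one_lt_omega0 r
  have htail := mod_opow_log_lt_self ω hr0
  rw [subst_eq_opow_mul_add he hsucc]
  refine omega0_opow_mul_add_lt_opow ?_ (div_opow_log_lt r one_lt_omega0) ?_
  · exact hmono _ (mem_substDomain_of_le hr (log_le_self ω r) (Ep_log_subset r))
      ((lt_opow_iff_log_lt one_lt_omega0 hr0).1 hra)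
  · exact IH _ htail (mem_substDomain_of_le hr htail.le (Ep_mod_opow_subset hsucc))
      (htail.trans hra)

theorem subst_lt_subst_of_isEps (he : IsEps e) (hx : x ∈ substDomain α e) (hxe : IsEps x)
    {y : Ordinal.{0}} (hy : y ∈ substDomain α e) (hyx : y < x) : subst α e y < subst α e x := by
  have hzα : ∀ z ∈ Ep y, z < α :=
    fun z hz => (le_of_mem_Ep hz).trans_lt (hyx.trans_le (hxe.le_of_lt_nextEps hx.1))
  refine subst_lt_of_forall_mem_Ep he (isEps_subst he hxe) y fun z hz => ?_
  rw [subst_of_isEps_of_ne (isEps_of_mem_Ep hz) (hzα z hz).ne, subst_of_isEps hxe]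
  split_ifs
  · exact hy.2 ⟨hz, hzα z hz⟩
  · exact (le_of_mem_Ep hz).trans_lt hyx

theorem subst_strictMonoOn (he : IsEps e) : StrictMonoOn (subst α e) (substDomain α e) := by
  suffices ∀ x ∈ substDomain α e, ∀ y ∈ substDomain α e, y < x → subst α e y < subst α e x from
    fun y hy x hx hyx => this x hx y hy hyx
  intro x
  induction x using WellFoundedLT.induction with | ind x IH
  intro hx y hy hyx
  by_cases hxe : IsEps x
  · exact subst_lt_subst_of_isEps he hx hxe hy hyx
  have hx0 : x ≠ 0 := (zero_le.trans_lt hyx).ne'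
  set a := log ω x
  have hxa : x < ω ^ (a + 1) := lt_opow_succ_log_self one_lt_omega0 x
  have hya : y < ω ^ (a + 1) := hyx.trans hxa
  have hmono := IH a (log_lt_self_of_not_isEps hxe hx0)
    (mem_substDomain_of_le hx (log_le_self ω x) (Ep_log_subset x))
  have hyD := mem_substDomain_of_le hy (mod_le y _) (Ep_mod_opow_subset hya)
  rw [subst_eq_opow_mul_add he hya, subst_eq_opow_mul_add he hxa]
  rcases div_lt_div_or_mod_lt (ω ^ a) hyx with hdiv | ⟨hdiv, hmod⟩
  · have htail := subst_lt_opow_subst he hmono _ hyD (mod_lt y (opow_ne_zero a omega0_ne_zero))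
    exact (opow_mul_add_lt_opow_mul htail hdiv).trans_le le_self_add
  · rw [hdiv]
    exact (add_lt_add_iff_left _).2 (IH _ (mod_opow_log_lt_self ω hx0)
      (mem_substDomain_of_le hx (mod_le x _) (Ep_mod_opow_subset hxa)) _ hyD hmod)

theorem subst_leftInvOn (hα : IsEps α) (he : IsEps e) :
    Set.LeftInvOn (subst e α) (subst α e) (substDomain α e) := by
  intro s hs
  induction s using WellFoundedLT.induction with | ind s IH
  by_cases hse : IsEps s
  · rw [subst_of_isEps hse]
    split_ifs with hsα
    · rw [subst_of_isEps he, if_pos rfl, hsα]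
    · have hsα : s < α := (hse.le_of_lt_nextEps hs.1).lt_of_ne hsα
      exact subst_of_isEps_of_ne hse (hs.2 ⟨mem_Ep_self hse, hsα⟩).ne
  rcases eq_or_ne s 0 with rfl | hs0
  · rw [subst_zero, subst_zero]
  set a := log ω s
  have ha := log_lt_self_of_not_isEps hse hs0
  have hr := mod_opow_log_lt_self ω hs0
  have haD := mem_substDomain_of_le hs (log_le_self ω s) (Ep_log_subset s)
  have hsucc : s < ω ^ (a + 1) := lt_opow_succ_log_self one_lt_omega0 s
  have hrD := mem_substDomain_of_le hs hr.le (Ep_mod_opow_subset hsucc)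
  have htail : subst α e (s % ω ^ a) < ω ^ subst α e a :=
    subst_lt_opow_subst he (fun z hz hza => subst_strictMonoOn he hz haD hza) _ hrD
      (mod_lt s (opow_ne_zero a omega0_ne_zero))
  rw [subst_eq_opow_mul_add he hsucc,
    subst_opow_mul_add hα (div_opow_log_lt s one_lt_omega0) htail, IH a ha haD, IH _ hr hrD]
  exact div_add_mod s (ω ^ a)

end Subst

/-- The substitution of α by e is inverted by the substitution of e by α. -/
theorem subst_subst (α e s : Ordinal.{0}) (hα : IsEps α) (he : IsEps e)
    (hs : s < nextEps α) (hse : Ep s ∩ Set.Iio α ⊆ Set.Iio e) :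
    subst e α (subst α e s) = s :=
  subst_leftInvOn hα he ⟨hs, hse⟩
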